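/- Let D ⊆ ℂ be open, Ψ : ℂ → ℂ analytic on D, λ1, λ2 ∈ ℝ, Λ = 1 + λ1² + λ2². Define F : ℂ → ℂ⁵ by F1(z) = (1/2)(1 − Λz²)Ψ''(z) + ΛzΨ'(z) − ΛΨ(z), F2(z) = (i/2)(1 + Λz²)Ψ''(z) − iΛzΨ'(z) + iΛΨ(z), F3(z) = zΨ''(z) − Ψ'(z), F4 = λ1 F3, F5 = λ2 F3. Then the derivative F'(z) satisfies the null condition: (F1')² + (F2')² + (F3')² + (F4')² + (F5')² = 0 on D. -/
import Mathlib


theorem stmt_16 (D : Set ℂ) (hD : IsOpen D) (Ψ : ℂ → ℂ)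
    (hΨ : ∀ z ∈ D, AnalyticAt ℂ Ψ z)
    (l1 l2 : ℝ) (Λ : ℝ) (hΛ : Λ = 1 + l1^2 + l2^2)
    (F1 F2 F3 F4 F5 : ℂ → ℂ)
    (hF1 : ∀ z ∈ D, F1 z = (1/2) * (1 - (Λ : ℂ) * z^2) * deriv (deriv Ψ) z
        + (Λ : ℂ) * z * deriv Ψ z - (Λ : ℂ) * Ψ z)
    (hF2 : ∀ z ∈ D, F2 z = (Complex.I/2) * (1 + (Λ : ℂ) * z^2) * deriv (deriv Ψ) z
        - Complex.I * (Λ : ℂ) * z * deriv Ψ z + Complex.I * (Λ : ℂ) * Ψ z)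
    (hF3 : ∀ z ∈ D, F3 z = z * deriv (deriv Ψ) z - deriv Ψ z)
    (hF4 : ∀ z ∈ D, F4 z = (l1 : ℂ) * F3 z)
    (hF5 : ∀ z ∈ D, F5 z = (l2 : ℂ) * F3 z) :
    ∀ z ∈ D,
      (deriv F1 z)^2 + (deriv F2 z)^2 + (deriv F3 z)^2
        + (deriv F4 z)^2 + (deriv F5 z)^2 = 0 := by
  intro z hz
  have hzD : D ∈ nhds z := hD.mem_nhds hz
  have hΨa := hΨ z hz
  have hAO : AnalyticOnNhd ℂ Ψ D := hΨ
  have h1 : AnalyticAt ℂ (deriv Ψ) z := hAO.deriv z hz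
  have h2 : AnalyticAt ℂ (deriv (deriv Ψ)) z := hAO.deriv.deriv z hz
  set p := deriv Ψ z with hp
  set q := deriv (deriv Ψ) z with hq
  set r := deriv (deriv (deriv Ψ)) z with hr
  have hΨd : HasDerivAt Ψ p z := hΨa.differentiableAt.hasDerivAt
  have h1d : HasDerivAt (deriv Ψ) q z := h1.differentiableAt.hasDerivAt
  have h2d : HasDerivAt (deriv (deriv Ψ)) r z := h2.differentiableAt.hasDerivAt
  have hw2 : HasDerivAt (fun w : ℂ => w ^ 2) (2 * z) z := by
    simpa using hasDerivAt_pow 2 z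
  -- F1
  have HA := ((((hw2.const_mul ((Λ : ℂ))).const_sub 1).const_mul (1/2 : ℂ)).mul h2d)
  have HB := (((hasDerivAt_id z).const_mul ((Λ : ℂ))).mul h1d)
  have HC := hΨd.const_mul ((Λ : ℂ))
  have H1 := (HA.add HB).sub HC
  have e1 : F1 =ᶠ[nhds z] fun w => (1/2) * (1 - (Λ : ℂ) * w^2) * deriv (deriv Ψ) w
        + (Λ : ℂ) * w * deriv Ψ w - (Λ : ℂ) * Ψ w :=
    Filter.eventuallyEq_of_mem hzD hF1
  have d1 : deriv F1 z = (1/2 * -((Λ : ℂ) * (2 * z))) * q + 1/2 * (1 - (Λ : ℂ) * z^2) * r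
      + (((Λ : ℂ) * 1) * p + (Λ : ℂ) * z * q) - (Λ : ℂ) * p := by
    rw [e1.deriv_eq]
    exact H1.deriv
  -- F2
  have HA2 := ((((hw2.const_mul ((Λ : ℂ))).const_add 1).const_mul (Complex.I/2)).mul h2d)
  have HB2 := (((hasDerivAt_id z).const_mul (Complex.I * (Λ : ℂ))).mul h1d)
  have HC2 := hΨd.const_mul (Complex.I * (Λ : ℂ))
  have H2 := (HA2.sub HB2).add HC2
  have e2 : F2 =ᶠ[nhds z] fun w => (Complex.I/2) * (1 + (Λ : ℂ) * w^2) * deriv (deriv Ψ) w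
        - Complex.I * (Λ : ℂ) * w * deriv Ψ w + Complex.I * (Λ : ℂ) * Ψ w :=
    Filter.eventuallyEq_of_mem hzD hF2
  have d2 : deriv F2 z = (Complex.I/2 * ((Λ : ℂ) * (2 * z))) * q
      + Complex.I/2 * (1 + (Λ : ℂ) * z^2) * r
      - ((Complex.I * (Λ : ℂ) * 1) * p + Complex.I * (Λ : ℂ) * z * q)
      + Complex.I * (Λ : ℂ) * p := by
    rw [e2.deriv_eq]
    exact H2.deriv
  -- F3
  have H3 := ((hasDerivAt_id z).mul h2d).sub h1d
  have e3 : F3 =ᶠ[nhds z] fun w => w * deriv (deriv Ψ) w - deriv Ψ w :=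
    Filter.eventuallyEq_of_mem hzD hF3
  have d3 : deriv F3 z = (1 * q + z * r) - q := by
    rw [e3.deriv_eq]; exact H3.deriv
  -- F4, F5
  have e4 : F4 =ᶠ[nhds z] fun w => (l1 : ℂ) * (w * deriv (deriv Ψ) w - deriv Ψ w) :=
    Filter.eventuallyEq_of_mem hzD (fun w hw => by rw [hF4 w hw, hF3 w hw])
  have d4 : deriv F4 z = (l1 : ℂ) * ((1 * q + z * r) - q) := by
    rw [e4.deriv_eq]; exact (H3.const_mul ((l1 : ℂ))).deriv
  have e5 : F5 =ᶠ[nhds z] fun w => (l2 : ℂ) * (w * deriv (deriv Ψ) w - deriv Ψ w) :=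
    Filter.eventuallyEq_of_mem hzD (fun w hw => by rw [hF5 w hw, hF3 w hw])
  have d5 : deriv F5 z = (l2 : ℂ) * ((1 * q + z * r) - q) := by
    rw [e5.deriv_eq]; exact (H3.const_mul ((l2 : ℂ))).deriv
  rw [d1, d2, d3, d4, d5, hΛ]
  have hI : Complex.I ^ 2 = -1 := Complex.I_sq
  push_cast
  ring_nf
  rw [hI]
  ring
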